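/- Let d ≥ 0 and m ≥ 2 be integers, let q₁, …, q_d, u₁, …, u_d ∈ ℤ[s,s⁻¹] be Laurent polynomials, let a₂, …, a_m be integers, and for each 2 ≤ n ≤ m let r̂_n ∈ ℤ[s,s⁻¹] be a Laurent polynomial with r̂_n(1) = n/2 if n is even and r̂_n(1) = 0 if n is odd. Suppose that (1 + s⁻¹) · Σ_{n=2}^{m} a_n · r̂_n(s) ≡ Σ_{i=1}^{d} ( s·u_i·q̄_i + q_i·ū_i + (1 + s)·u_i·ū_i ) modulo 2 in ℤ[s,s⁻¹], where q̄_i and ū_i denote the Laurent polynomials obtained from q_i and u_i by substituting s⁻¹ for s. Then Σ { a_n : 2 ≤ n ≤ m, n ≡ 2 (mod 4) } ≡ Σ { u_i(1) : 1 ≤ i ≤ d, q_i(1) is even } modulo 2. -/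

import Mathlib

open LaurentPolynomial

/-- The Laurent polynomial obtained from `g` by substituting `s⁻¹` for `s`
(i.e. negating every exponent). -/
noncomputable def lbar (g : LaurentPolynomial ℤ) : LaurentPolynomial ℤ :=
  AddMonoidAlgebra.ofCoeff (Finsupp.mapDomain (fun n : ℤ => -n) g.coeff)

/-- Evaluation of a Laurent polynomial at `s = 1`, i.e. the sum of its coefficients. -/
noncomputable def eval1 (g : LaurentPolynomial ℤ) : ℤ :=
  g.coeff.sum fun _ a => a

/-- The additive map `φ : ℤ[s,s⁻¹] → ℤ/2ℤ` determined by `φ(s^k) = k mod 2`;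
equivalently, formal derivative followed by evaluation at `1` and reduction mod `2`. -/
noncomputable def phi (g : LaurentPolynomial ℤ) : ZMod 2 :=
  ((g.coeff.sum fun k a => a * k : ℤ) : ZMod 2)

/-- Two Laurent polynomials are congruent modulo 2 if every coefficient of their
difference is even, i.e. the difference is `2` times a Laurent polynomial. -/
def cong2 (g h : LaurentPolynomial ℤ) : Prop := ∃ p, g - h = 2 * p


/-!
Send `s ↦ 1 + ε` into the dual numbers `𝔽₂[ε]`, i.e. expand to first order at `s = 1` and
reduce mod 2. This ring map kills `2`, and since `(1 + ε)⁻¹ = 1 - ε = 1 + ε` it is invariant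
under `s ↦ s⁻¹`; both `1 + s` and `1 + s⁻¹` go to `ε`, so the `ε`-coefficient of the image of
`(1 + s^{±1}) f` is `f(1) mod 2`. Comparing `ε`-coefficients of the two sides of the congruence
gives `∑ aₙ r̂ₙ(1) ≡ ∑ uᵢ(1) (qᵢ(1) + uᵢ(1))`, and `r̂ₙ(1)` is odd exactly when `n ≡ 2 (mod 4)`,
while `u (q + u) ≡ u` or `0` according as `q` is even or odd.
-/

open DualNumber TrivSqZeroExt

namespace DualNumber

variable (R : Type*) [CommRing R]

def oneAddEps : R[ε]ˣ where
  val := 1 + ε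
  inv := 1 - ε
  val_inv := by linear_combination -(eps_mul_eps (R := R))
  inv_val := by linear_combination -(eps_mul_eps (R := R))

variable {R}

lemma fst_oneAddEps_zpow (k : ℤ) : fst ((oneAddEps R ^ k : R[ε]ˣ) : R[ε]) = 1 := by
  have h : Units.map (fstHom R R R).toMonoidHom (oneAddEps R) = 1 := by
    ext; simp [oneAddEps]
  simpa [← map_zpow] using congrArg (fun x => ((x ^ k : Rˣ) : R)) h

lemma snd_eps_mul (x : R[ε]) : snd (ε * x) = fst x := by
  rw [DualNumber.snd_mul, fst_eps, snd_eps, zero_mul, zero_add, one_mul]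

variable [CharP R 2]

variable (R) in
lemma two_eq_zero_of_charTwo : (2 : R[ε]) = 0 := by
  rw [← Nat.cast_ofNat]
  ext
  · rw [fst_natCast, Nat.cast_ofNat, CharTwo.two_eq_zero, fst_zero]
  · rw [snd_natCast, snd_zero]

lemma oneAddEps_inv_of_charTwo : (oneAddEps R)⁻¹ = oneAddEps R :=
  Units.ext (show (1 - ε : R[ε]) = 1 + ε by linear_combination (-ε) * two_eq_zero_of_charTwo R)

end DualNumber

noncomputable def taylorAtOne (R : Type*) [CommRing R] : LaurentPolynomial ℤ →+* R[ε] :=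
  eval₂ (Int.castRingHom _) (oneAddEps R)

section taylorAtOne

variable {R : Type*} [CommRing R]

lemma eval1_add (f g : LaurentPolynomial ℤ) : eval1 (f + g) = eval1 f + eval1 g :=
  Finsupp.sum_add_index' (fun _ => rfl) fun _ _ _ => rfl

lemma eval1_single (k a : ℤ) : eval1 (.single k a) = a :=
  Finsupp.sum_single_index rfl

lemma fst_taylorAtOne (g : LaurentPolynomial ℤ) : fst (taylorAtOne R g) = eval1 g := by
  induction g using AddMonoidAlgebra.induction_linear with
  | zero => rw [map_zero, fst_zero, eval1, AddMonoidAlgebra.coeff_zero, Finsupp.sum_zero_index,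
      Int.cast_zero]
  | add f g hf hg => rw [map_add, fst_add, hf, hg, eval1_add, Int.cast_add]
  | single k a =>
    rw [eval1_single, single_eq_C_mul_T, taylorAtOne, eval₂_C_mul_T, fst_mul,
      fst_oneAddEps_zpow, mul_one, eq_intCast, fst_intCast]

lemma taylorAtOne_T_one : taylorAtOne R (T 1) = 1 + ε := by
  rw [taylorAtOne, eval₂_T, zpow_one]
  rfl

variable [CharP R 2]

lemma taylorAtOne_T_neg (k : ℤ) : taylorAtOne R (T (-k)) = taylorAtOne R (T k) := by
  rw [taylorAtOne, eval₂_T, eval₂_T, zpow_neg, ← inv_zpow, oneAddEps_inv_of_charTwo]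

lemma taylorAtOne_lbar (g : LaurentPolynomial ℤ) : taylorAtOne R (lbar g) = taylorAtOne R g := by
  change ((taylorAtOne R).comp invert.toRingHom) g = _
  congr 1
  refine AddMonoidAlgebra.ringHom_ext (fun r => ?_) (fun k => ?_)
  · simp
  · exact (congrArg (taylorAtOne R) (invert_T k)).trans (taylorAtOne_T_neg k)

lemma taylorAtOne_one_add_T_one : taylorAtOne R (1 + T 1) = ε := by
  rw [map_add, map_one, taylorAtOne_T_one]
  linear_combination two_eq_zero_of_charTwo R

lemma taylorAtOne_one_add_T_neg_one : taylorAtOne R (1 + T (-1)) = ε := by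
  rw [map_add, taylorAtOne_T_neg, ← map_add, taylorAtOne_one_add_T_one]

lemma taylorAtOne_eq_of_cong2 {g h : LaurentPolynomial ℤ} (hgh : cong2 g h) :
    taylorAtOne R g = taylorAtOne R h := by
  obtain ⟨p, hp⟩ := hgh
  rw [← sub_eq_zero, ← map_sub, hp, map_mul, map_ofNat, two_eq_zero_of_charTwo R, zero_mul]

lemma snd_taylorAtOne_hermitian (q u : LaurentPolynomial ℤ) :
    snd (taylorAtOne R (T 1 * u * lbar q + q * lbar u + (1 + T 1) * u * lbar u)) =
      ((eval1 u * eval1 q + eval1 u * eval1 u : ℤ) : R) := by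
  set U := taylorAtOne R u
  set Q := taylorAtOne R q
  have hε : taylorAtOne R (T 1 * u * lbar q + q * lbar u + (1 + T 1) * u * lbar u) =
      ε * (U * Q + U * U) := by
    simp only [map_add, map_mul, map_one, taylorAtOne_lbar, taylorAtOne_T_one]
    linear_combination (U * Q + U * U) * two_eq_zero_of_charTwo R
  rw [hε, snd_eps_mul, fst_add, fst_mul, fst_mul, fst_taylorAtOne, fst_taylorAtOne]
  push_cast
  rfl

end taylorAtOne

lemma intCast_zmod_two_eq_ite_mod_four {n : ℕ} {r : ℤ}
    (hr : (Even n → 2 * r = n) ∧ (¬ Even n → r = 0)) :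
    (r : ZMod 2) = if n % 4 = 2 then 1 else 0 := by
  by_cases hn : Even n
  · have hr2 := hr.1 hn
    rw [Nat.even_iff] at hn
    split_ifs with h4
    · exact ZMod.intCast_eq_one_iff_odd.mpr (Int.odd_iff.mpr (by omega))
    · exact ZMod.intCast_eq_zero_iff_even.mpr (Int.even_iff.mpr (by omega))
  · rw [hr.2 hn, Int.cast_zero, if_neg (by rw [Nat.even_iff] at hn; omega)]

lemma intCast_zmod_two_mul_add_mul_self (u q : ℤ) :
    ((u * q + u * u : ℤ) : ZMod 2) = if Even q then (u : ZMod 2) else 0 := by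
  simp only [← ZMod.intCast_eq_zero_iff_even]
  push_cast
  generalize (u : ZMod 2) = x
  generalize (q : ZMod 2) = y
  revert x y
  decide

theorem final_step_general (d m : ℕ)
    (q u : ℕ → LaurentPolynomial ℤ) (a : ℕ → ℤ)
    (rhat : ℕ → LaurentPolynomial ℤ)
    (hr : ∀ n, 2 ≤ n → n ≤ m →
      (Even n → 2 * eval1 (rhat n) = (n : ℤ)) ∧ (¬ Even n → eval1 (rhat n) = 0))
    (hcong : cong2
      ((1 + T (-1)) * ∑ n ∈ Finset.Icc 2 m, (a n : LaurentPolynomial ℤ) * rhat n)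
      (∑ i ∈ Finset.Icc 1 d,
        (T 1 * u i * lbar (q i) + q i * lbar (u i) + (1 + T 1) * u i * lbar (u i)))) :
    ((∑ n ∈ (Finset.Icc 2 m).filter (fun n => n % 4 = 2), a n : ℤ) : ZMod 2) =
      ((∑ i ∈ (Finset.Icc 1 d).filter (fun i => Even (eval1 (q i))), eval1 (u i) : ℤ)
        : ZMod 2) := by
  have key := congrArg snd (taylorAtOne_eq_of_cong2 (R := ZMod 2) hcong)
  simp only [map_mul, taylorAtOne_one_add_T_neg_one, snd_eps_mul, map_sum, fst_sum, snd_sum,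
    fst_mul, map_intCast, fst_intCast, fst_taylorAtOne, snd_taylorAtOne_hermitian,
    intCast_zmod_two_mul_add_mul_self] at key
  push_cast
  rw [Finset.sum_filter, Finset.sum_filter, ← key]
  refine Finset.sum_congr rfl fun n hn => ?_
  obtain ⟨h2n, hnm⟩ := Finset.mem_Icc.mp hn
  rw [intCast_zmod_two_eq_ite_mod_four (hr n h2n hnm)]
  split_ifs <;> simp

theorem final_step (d m : ℕ) (hm : 2 ≤ m)
    (q u : ℕ → LaurentPolynomial ℤ) (a : ℕ → ℤ)
    (rhat : ℕ → LaurentPolynomial ℤ)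
    (hr : ∀ n, 2 ≤ n → n ≤ m →
      (Even n → 2 * eval1 (rhat n) = (n : ℤ)) ∧ (¬ Even n → eval1 (rhat n) = 0))
    (hcong : cong2
      ((1 + T (-1)) * ∑ n ∈ Finset.Icc 2 m, (a n : LaurentPolynomial ℤ) * rhat n)
      (∑ i ∈ Finset.Icc 1 d,
        (T 1 * u i * lbar (q i) + q i * lbar (u i) + (1 + T 1) * u i * lbar (u i)))) :
    ((∑ n ∈ (Finset.Icc 2 m).filter (fun n => n % 4 = 2), a n : ℤ) : ZMod 2) =
      ((∑ i ∈ (Finset.Icc 1 d).filter (fun i => Even (eval1 (q i))), eval1 (u i) : ℤ)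
        : ZMod 2) :=
  final_step_general d m q u a rhat hr hcong
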